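/- Let n ≥ 2 be an integer and α a real number with α > −n/2. Define I₁ = ∫_0^π sin^{n−2}φ dφ · ∫_0^{π/2} ((n+α) cos²θ − α)² sin^{n−1}θ cos^{n−1+2α}θ dθ and I₂ = (n+α)² ∫_0^π sin^{n−2}φ cos²φ dφ · ∫_0^{π/2} sin^{n+1}θ cos^{n+1+2α}θ dθ. Then I₁ / I₂ = n(n+2)/(n+2α); in particular I₁ ≥ I₂ if and only if α ≤ n(n+1)/2. -/

import Mathlib

/-!
With `J p q = ∫₀^{π/2} sin^p θ cos^q θ dθ`, integration by parts gives
`(p + q + 2) J p (q + 2) = (q + 1) J p q`, and `sin² = 1 - cos²` gives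
`J (p + 2) q = J p q - J p (q + 2)`. Together they turn both θ-integrals into rational multiples
of `J (n - 1) (n - 1 + 2α)`: `n (n + 2) (n + α)² / D` for the one in `I₁` and `n (n + 2α) / D`
for the one in `I₂`, where `D = 4 (n + α) (n + 1 + α)`. Since also
`n ∫₀^π sin^{n-2} cos² = ∫₀^π sin^{n-2}`, all integrals cancel from `I₁ / I₂`.
-/

open MeasureTheory Real Set intervalIntegral

lemma cos_rpow_le_of_neg {q θ : ℝ} (hq : q < 0) (h0 : 0 ≤ θ) (h1 : θ ≤ π / 2) :
    cos θ ^ q ≤ (2 / π) ^ q * (π / 2 - θ) ^ q := by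
  rcases h1.eq_or_lt with rfl | hlt
  · simp [zero_rpow hq.ne]
  have hlin : 0 < 2 / π * (π / 2 - θ) := mul_pos (by positivity) (by linarith)
  have hcos : 2 / π * (π / 2 - θ) ≤ cos θ := by
    convert one_sub_mul_le_cos h0 h1 using 1
    field_simp
  rw [← mul_rpow (by positivity) (by linarith)]
  exact rpow_le_rpow_of_nonpos hlin hcos hq.le

lemma intervalIntegrable_sin_pow_mul_cos_rpow (p : ℕ) {q : ℝ} (hq : -1 < q) :
    IntervalIntegrable (fun θ => sin θ ^ p * cos θ ^ q) volume 0 (π / 2) := by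
  rcases le_or_gt 0 q with hq0 | hq0
  · exact ((continuous_sin.pow p).mul
      ((continuous_rpow_const hq0).comp continuous_cos)).intervalIntegrable _ _
  have hdom : IntervalIntegrable (fun θ => (2 / π) ^ q * (π / 2 - θ) ^ q) volume 0 (π / 2) := by
    have := (intervalIntegrable_rpow' (a := π / 2) (b := 0) hq).comp_sub_left (π / 2)
    simpa using this.const_mul ((2 / π) ^ q)
  refine hdom.mono_fun' (by fun_prop : Measurable _).aestronglyMeasurable ?_
  rw [Filter.EventuallyLE, ae_restrict_iff' measurableSet_uIoc]
  refine .of_forall fun θ hθ => ?_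
  rw [uIoc_of_le (by positivity)] at hθ
  have hsin : 0 ≤ sin θ := sin_nonneg_of_nonneg_of_le_pi hθ.1.le (by linarith [pi_pos, hθ.2])
  have hcos : 0 ≤ cos θ := cos_nonneg_of_mem_Icc ⟨by linarith [pi_pos, hθ.1], hθ.2⟩
  calc ‖sin θ ^ p * cos θ ^ q‖ = sin θ ^ p * cos θ ^ q := by
        rw [norm_of_nonneg (by positivity)]
    _ ≤ cos θ ^ q := mul_le_of_le_one_left (by positivity) (pow_le_one₀ hsin (sin_le_one θ))
    _ ≤ (2 / π) ^ q * (π / 2 - θ) ^ q := cos_rpow_le_of_neg hq0 hθ.1.le hθ.2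

lemma Real.rpow_add_two' {x : ℝ} (hx : 0 ≤ x) {q : ℝ} (hq : q ≠ -2) :
    x ^ (q + 2) = x ^ q * x ^ 2 := by
  exact_mod_cast rpow_add_natCast' (n := 2) hx (by push_cast; intro h; exact hq (by linarith))

noncomputable def sinCosIntegral (p : ℕ) (q : ℝ) : ℝ :=
  ∫ θ in (0 : ℝ)..π / 2, sin θ ^ p * cos θ ^ q

lemma sinCosIntegral_pos (p : ℕ) {q : ℝ} (hq : -1 < q) : 0 < sinCosIntegral p q := by
  refine intervalIntegral_pos_of_pos_on (intervalIntegrable_sin_pow_mul_cos_rpow p hq)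
    (fun θ hθ => ?_) (by positivity)
  have hsin : 0 < sin θ := sin_pos_of_pos_of_lt_pi hθ.1 (by linarith [pi_pos, hθ.2])
  have hcos : 0 < cos θ := cos_pos_of_mem_Ioo ⟨by linarith [pi_pos, hθ.1], hθ.2⟩
  positivity

lemma cos_nonneg_of_mem_uIcc_zero_pi_div_two {θ : ℝ} (hθ : θ ∈ uIcc 0 (π / 2)) : 0 ≤ cos θ := by
  rw [uIcc_of_le (by positivity)] at hθ
  exact cos_nonneg_of_mem_Icc ⟨by linarith [pi_pos, hθ.1], hθ.2⟩

lemma sinCosIntegral_add_two_left (p : ℕ) {q : ℝ} (hq : -1 < q) :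
    sinCosIntegral (p + 2) q = sinCosIntegral p q - sinCosIntegral p (q + 2) := by
  rw [sinCosIntegral, sinCosIntegral, sinCosIntegral, ← integral_sub
    (intervalIntegrable_sin_pow_mul_cos_rpow p hq)
    (intervalIntegrable_sin_pow_mul_cos_rpow p (by linarith))]
  refine integral_congr fun θ hθ => ?_
  rw [rpow_add_two' (cos_nonneg_of_mem_uIcc_zero_pi_div_two hθ) (by linarith), pow_add]
  linear_combination sin θ ^ p * cos θ ^ q * sin_sq_add_cos_sq θ

/-- Integration by parts against `d/dθ (sin^(p+1) θ cos^(q+1) θ)`, which vanishes at both ends. -/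
lemma sinCosIntegral_add_two_right (p : ℕ) {q : ℝ} (hq : -1 < q) :
    (p + q + 2) * sinCosIntegral p (q + 2) = (q + 1) * sinCosIntegral p q := by
  have hF : ∀ x ∈ Ioo 0 (π / 2), HasDerivAt (fun θ => sin θ ^ (p + 1) * cos θ ^ (q + 1))
      ((p + q + 2) * (sin x ^ p * cos x ^ (q + 2)) - (q + 1) * (sin x ^ p * cos x ^ q)) x := by
    intro x hx
    have hcos : 0 < cos x := cos_pos_of_mem_Ioo ⟨by linarith [pi_pos, hx.1], hx.2⟩
    refine (((hasDerivAt_sin x).fun_pow (p + 1)).mul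
      ((hasDerivAt_cos x).rpow_const (p := q + 1) (.inl hcos.ne'))).congr_deriv ?_
    rw [rpow_add_two' hcos.le (by linarith), add_sub_cancel_right, rpow_add_one hcos.ne']
    push_cast
    linear_combination -(q + 1) * sin x ^ p * cos x ^ q * sin_sq_add_cos_sq x
  have hint₂ := (intervalIntegrable_sin_pow_mul_cos_rpow p (q := q + 2) (by linarith)).const_mul
    (p + q + 2)
  have hint₀ := (intervalIntegrable_sin_pow_mul_cos_rpow p hq).const_mul (q + 1)
  have hFTC := integral_eq_sub_of_hasDerivAt_of_le (by positivity)
    (by fun_prop (disch := linarith)) hF (hint₂.sub hint₀)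
  rw [intervalIntegral.integral_sub hint₂ hint₀, intervalIntegral.integral_const_mul,
    intervalIntegral.integral_const_mul] at hFTC
  rw [cos_pi_div_two, sin_zero, zero_rpow (by linarith), zero_pow p.succ_ne_zero, mul_zero,
    zero_mul, sub_self] at hFTC
  rw [sinCosIntegral, sinCosIntegral]
  linarith

lemma sinCosIntegral_add_two_add_two (p : ℕ) {q : ℝ} (hq : -1 < q) :
    (p + q + 2) * (p + q + 4) * sinCosIntegral (p + 2) (q + 2) =
      (p + 1) * (q + 1) * sinCosIntegral p q := by
  have h₂ := sinCosIntegral_add_two_right p hq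
  have h₄ := sinCosIntegral_add_two_right p (q := q + 2) (by linarith)
  have hsplit := sinCosIntegral_add_two_left p (q := q + 2) (by linarith)
  linear_combination (p + q + 2) * (p + q + 4) * hsplit - (p + q + 2) * h₄ + (p + 1) * h₂

lemma integral_sq_mul_sin_pow_mul_cos_rpow (a b : ℝ) (p : ℕ) {q : ℝ} (hq : -1 < q) :
    ∫ θ in (0 : ℝ)..π / 2, (a * cos θ ^ 2 - b) ^ 2 * sin θ ^ p * cos θ ^ q =
      a ^ 2 * sinCosIntegral p (q + 2 + 2) - 2 * a * b * sinCosIntegral p (q + 2) +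
        b ^ 2 * sinCosIntegral p q := by
  have h₄ := (intervalIntegrable_sin_pow_mul_cos_rpow p (q := q + 2 + 2) (by linarith)).const_mul
    (a ^ 2)
  have h₂ := (intervalIntegrable_sin_pow_mul_cos_rpow p (q := q + 2) (by linarith)).const_mul
    (2 * a * b)
  have h₀ := (intervalIntegrable_sin_pow_mul_cos_rpow p hq).const_mul (b ^ 2)
  simp only [sinCosIntegral, ← intervalIntegral.integral_const_mul,
    ← intervalIntegral.integral_sub h₄ h₂, ← intervalIntegral.integral_add (h₄.sub h₂) h₀]
  refine integral_congr fun θ hθ => ?_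
  have hcos := cos_nonneg_of_mem_uIcc_zero_pi_div_two hθ
  rw [rpow_add_two' hcos (by linarith), rpow_add_two' hcos (by linarith)]
  ring

lemma mul_integral_sq_mul_sin_pow_mul_cos_rpow (a b : ℝ) (p : ℕ) {q : ℝ} (hq : -1 < q) :
    (p + q + 2) * (p + q + 4) *
        ∫ θ in (0 : ℝ)..π / 2, (a * cos θ ^ 2 - b) ^ 2 * sin θ ^ p * cos θ ^ q =
      (a ^ 2 * (q + 1) * (q + 3) - 2 * a * b * (q + 1) * (p + q + 4) +
        b ^ 2 * (p + q + 2) * (p + q + 4)) * sinCosIntegral p q := by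
  have h₂ := sinCosIntegral_add_two_right p hq
  have h₄ := sinCosIntegral_add_two_right p (q := q + 2) (by linarith)
  rw [integral_sq_mul_sin_pow_mul_cos_rpow a b p hq]
  linear_combination (a ^ 2 * (p + q + 2) * h₄) + (a ^ 2 * (q + 3) - 2 * a * b * (p + q + 4)) * h₂

lemma integral_sin_pow_mul_cos_sq (k : ℕ) :
    (k + 2) * ∫ φ in (0 : ℝ)..π, sin φ ^ k * cos φ ^ 2 = ∫ φ in (0 : ℝ)..π, sin φ ^ k := by
  have hcongr : ∀ φ, sin φ ^ k * cos φ ^ 2 = sin φ ^ k - sin φ ^ (k + 2) := fun φ => by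
    linear_combination sin φ ^ k * cos_sq_add_sin_sq φ
  simp_rw [hcongr]
  rw [intervalIntegral.integral_sub
    ((by fun_prop : Continuous fun φ => sin φ ^ k).intervalIntegrable _ _)
    ((by fun_prop : Continuous fun φ => sin φ ^ (k + 2)).intervalIntegrable _ _), integral_sin_pow]
  simp only [sin_zero, sin_pi, zero_pow k.succ_ne_zero, zero_mul, sub_self, zero_div, zero_add]
  field_simp
  ring

/-- For `n ≥ 2`, `α > −n/2`, with
`I₁ = ∫₀^π sin^{n−2}φ dφ · ∫₀^{π/2} ((n+α)cos²θ − α)² sin^{n−1}θ cos^{n−1+2α}θ dθ` and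
`I₂ = (n+α)² ∫₀^π sin^{n−2}φ cos²φ dφ · ∫₀^{π/2} sin^{n+1}θ cos^{n+1+2α}θ dθ`,
one has `I₁/I₂ = n(n+2)/(n+2α)`; in particular `I₁ ≥ I₂ ↔ α ≤ n(n+1)/2`. -/
theorem stmt_16 (n : ℕ) (hn : 2 ≤ n) (α : ℝ) (hα : -((n : ℝ) / 2) < α)
    (I₁ I₂ : ℝ)
    (hI₁ : I₁ = (∫ φ in (0:ℝ)..Real.pi, Real.sin φ ^ (n - 2)) *
      ∫ θ in (0:ℝ)..(Real.pi / 2),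
        (((n : ℝ) + α) * Real.cos θ ^ 2 - α) ^ 2 * Real.sin θ ^ (n - 1) *
          Real.cos θ ^ ((n : ℝ) - 1 + 2 * α))
    (hI₂ : I₂ = ((n : ℝ) + α) ^ 2 *
        (∫ φ in (0:ℝ)..Real.pi, Real.sin φ ^ (n - 2) * Real.cos φ ^ 2) *
        ∫ θ in (0:ℝ)..(Real.pi / 2),
          Real.sin θ ^ (n + 1) * Real.cos θ ^ ((n : ℝ) + 1 + 2 * α)) :
    I₁ / I₂ = (n : ℝ) * (n + 2) / ((n : ℝ) + 2 * α) ∧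
      (I₂ ≤ I₁ ↔ α ≤ (n : ℝ) * (n + 1) / 2) := by
  have hq : -1 < (n : ℝ) - 1 + 2 * α := by linarith
  have hn₁ : ((n - 1 : ℕ) : ℝ) = n - 1 := by rw [Nat.cast_sub (by omega), Nat.cast_one]
  have hn₂ : ((n - 2 : ℕ) : ℝ) + 2 = n := by rw [Nat.cast_sub hn, Nat.cast_ofNat, sub_add_cancel]
  have hφ := integral_sin_pow_mul_cos_sq (n - 2)
  have hθ₁ := mul_integral_sq_mul_sin_pow_mul_cos_rpow (n + α) α (n - 1) hq
  have hθ₂ := sinCosIntegral_add_two_add_two (n - 1) hq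
  rw [hn₂] at hφ
  rw [hn₁] at hθ₁ hθ₂
  rw [show n - 1 + 2 = n + 1 by omega, show (n : ℝ) - 1 + 2 * α + 2 = n + 1 + 2 * α by ring] at hθ₂
  rw [← sinCosIntegral.eq_1] at hI₂
  set S := ∫ φ in (0 : ℝ)..π, sin φ ^ (n - 2)
  set C := ∫ φ in (0 : ℝ)..π, sin φ ^ (n - 2) * cos φ ^ 2
  set J := sinCosIntegral (n - 1) (n - 1 + 2 * α)
  have h₁ : (0 : ℝ) < n + α := by linarith
  have h₂ : (0 : ℝ) < n + 2 * α := by linarith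
  have hC : 0 < C :=
    pos_of_mul_pos_right (hφ ▸ integral_sin_pow_pos (n - 2)) n.cast_nonneg
  have hI₂pos : 0 < I₂ := by
    rw [hI₂]
    exact mul_pos (mul_pos (pow_pos h₁ 2) hC) (sinCosIntegral_pos (n + 1) (by linarith))
  have hratio : I₁ * (n + 2 * α) = n * (n + 2) * I₂ := by
    have hD : (0 : ℝ) < 4 * (n + α) * (n + 1 + α) := mul_pos (by positivity) (by linarith)
    refine mul_left_cancel₀ hD.ne' ?_
    rw [hI₁, hI₂]
    linear_combination (n + 2 * α) * S * hθ₁ - n * (n + 2) * (n + α) ^ 2 * C * hθ₂ -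
      (n + 2 * α) * n * (n + 2) * (n + α) ^ 2 * J * hφ
  have hdiv : I₁ / I₂ = n * (n + 2) / (n + 2 * α) := by
    rw [div_eq_div_iff hI₂pos.ne' h₂.ne']
    linear_combination hratio
  refine ⟨hdiv, ?_⟩
  rw [← one_le_div hI₂pos, hdiv, one_le_div h₂]
  constructor <;> intro h <;> linarith
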